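/- arXiv:2601.09325 — 6 statements merged into one kernel-verified Lean document; each statement's English description precedes it below -/
import Mathlib

section
/- Every countable scattered linear order belongs to VD, i.e., the class of countable scattered linear orders is the smallest class of countable linear orders containing 0 and 1 and closed under ordered sums indexed by finite linear orders, ω, ω*, and ζ = ω* + ω. -/
/-- The (sub)order `I ⊆ ℚ` has order type `ω`, `ω*`, `ζ` (the integers), or is finite. -/
def GoodIndex (I : Set ℚ) : Prop :=
  Nonempty (I ≃o ℕ) ∨ Nonempty (I ≃o ℕᵒᵈ) ∨ Nonempty (I ≃o ℤ) ∨ I.Finite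

/-- `VD α S` : the countable linear order `S ⊆ ℚ` lies in the class `VD_α`
of very discrete linear orders: `VD_0` consists of the empty and one-point orders,
and `S ∈ VD_α` if `S` is an ordered sum, indexed by an order of type `ω`, `ω*`, `ζ`
or a finite order, of orders lying in `⋃_{β<α} VD_β`. -/
inductive VD : Ordinal.{0} → Set ℚ → Prop
  | empty : VD 0 ∅
  | single (q : ℚ) : VD 0 {q}
  | sum (α : Ordinal.{0}) (I : Set ℚ) (hI : GoodIndex I)
      (L : ℚ → Set ℚ) (β : ℚ → Ordinal.{0})
      (hβ : ∀ i ∈ I, β i < α) (h : ∀ i ∈ I, VD (β i) (L i))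
      (S : Set ℚ)
      (hiso : Nonempty (S ≃o (Σₗ i : I, L i.val))) : VD α S

/-!
Hausdorff's condensation argument. Write `a ~ b` when every suborder of the interval between `a`
and `b` is in VD. Since VD is closed under ordered sums along finite, `ω` and `ω*` index orders,
`~` is an equivalence relation with convex classes, and a countable order whose points are all
`~`-equivalent is in VD: cut it at a point and exhaust the two halves by an `ω*`- and an
`ω`-sequence of intervals. If every point strictly between `x < y` were equivalent to `x` or to
`y`, then `[x, y]` would be the sum of two such orders, so `x ~ y`. Hence, as soon as two points
are inequivalent, a set of representatives of the classes is a countable dense order with two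
points, and `ℚ` embeds into it.
-/

open Set

def IsVD (X : Type) [LinearOrder X] : Prop :=
  ∃ (α : Ordinal.{0}) (S : Set ℚ), Nonempty (X ≃o S) ∧ VD α S

def GoodIndexType (ι : Type) [LinearOrder ι] : Prop :=
  Nonempty (ι ≃o ℕ) ∨ Nonempty (ι ≃o ℕᵒᵈ) ∨ Nonempty (ι ≃o ℤ) ∨ Finite ι

theorem exists_orderIso_set_rat (Y : Type) [LinearOrder Y] [Countable Y] :
    ∃ S : Set ℚ, Nonempty (Y ≃o S) :=
  let ⟨e⟩ := Order.embedding_from_countable_to_dense Y ℚ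
  ⟨_, ⟨e.strictMono.orderIso⟩⟩

theorem GoodIndexType.exists_goodIndex_orderIso {ι : Type} [LinearOrder ι]
    (h : GoodIndexType ι) : ∃ I : Set ℚ, GoodIndex I ∧ Nonempty (ι ≃o I) := by
  have : Countable ι := by
    rcases h with (⟨⟨f⟩⟩ | ⟨⟨f⟩⟩ | ⟨⟨f⟩⟩ | h)
    exacts [f.toEquiv.countable_iff.2 inferInstance, f.toEquiv.countable_iff.2 inferInstance,
      f.toEquiv.countable_iff.2 inferInstance, Finite.to_countable]
  obtain ⟨I, ⟨e⟩⟩ := exists_orderIso_set_rat ι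
  refine ⟨I, ?_, ⟨e⟩⟩
  rcases h with (⟨⟨f⟩⟩ | ⟨⟨f⟩⟩ | ⟨⟨f⟩⟩ | h)
  exacts [Or.inl ⟨e.symm.trans f⟩, Or.inr (Or.inl ⟨e.symm.trans f⟩),
    Or.inr (Or.inr (Or.inl ⟨e.symm.trans f⟩)), Or.inr (Or.inr (Or.inr (Finite.of_equiv ι e)))]

namespace IsVD

variable {X Y : Type} [LinearOrder X] [LinearOrder Y]

theorem of_orderIso (h : IsVD X) (e : X ≃o Y) : IsVD Y :=
  let ⟨α, S, ⟨f⟩, hS⟩ := h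
  ⟨α, S, ⟨e.symm.trans f⟩, hS⟩

theorem countable (h : IsVD X) : Countable X :=
  let ⟨_, _, ⟨f⟩, _⟩ := h
  f.toEquiv.countable_iff.2 inferInstance

theorem of_subsingleton [Subsingleton X] : IsVD X := by
  rcases isEmpty_or_nonempty X with hX | ⟨⟨x⟩⟩
  · exact ⟨0, ∅, ⟨⟨Equiv.equivOfIsEmpty X _, fun {a} => isEmptyElim a⟩⟩, VD.empty⟩
  · have : Unique X := uniqueOfSubsingleton x
    exact ⟨0, {0}, ⟨⟨Equiv.ofUnique X _, fun {a b} => by simp [Subsingleton.elim a b]⟩⟩,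
      VD.single 0⟩

end IsVD

noncomputable def sigmaLexCongrRight {ι : Type*} [LinearOrder ι] {F G : ι → Type*}
    [∀ i, LinearOrder (F i)] [∀ i, LinearOrder (G i)] (e : ∀ i, F i ≃o G i) :
    (Σₗ i, F i) ≃o Σₗ i, G i :=
  StrictMono.orderIsoOfSurjective (fun p => toLex ⟨(ofLex p).1, e _ (ofLex p).2⟩)
    (by
      rintro ⟨i, x⟩ ⟨j, y⟩ (⟨_, _, hij⟩ | ⟨_, _, hxy⟩)
      · exact Sigma.Lex.left _ _ hij
      · exact Sigma.Lex.right _ _ ((e _).strictMono hxy))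
    (fun p => ⟨toLex ⟨(ofLex p).1, (e _).symm (ofLex p).2⟩,
      congrArg toLex (Sigma.ext rfl (heq_of_eq ((e _).apply_symm_apply _)))⟩)

theorem IsVD.sigmaLex {I : Set ℚ} (hI : GoodIndex I) {F : I → Type} [∀ i, LinearOrder (F i)]
    (hF : ∀ i, IsVD (F i)) : IsVD (Σₗ i, F i) := by
  have : ∀ i, Countable (F i) := fun i => (hF i).countable
  have : Countable (Σₗ i, F i) := Countable.of_equiv (Σ i, F i) toLex
  obtain ⟨S₀, ⟨e₀⟩⟩ := exists_orderIso_set_rat (Σₗ i, F i)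
  choose α S e hS using hF
  classical
  let L : ℚ → Set ℚ := fun q => if h : q ∈ I then S ⟨q, h⟩ else ∅
  let β : ℚ → Ordinal.{0} := fun q => if h : q ∈ I then α ⟨q, h⟩ else 0
  have hL (i : I) : S i = L i := by simp [L]
  have e' : (Σₗ i, F i) ≃o Σₗ i : I, L i :=
    sigmaLexCongrRight fun i => (e i).some.trans (OrderIso.setCongr _ _ (hL i))
  refine ⟨⨆ i, α i + 1, S₀, ⟨e₀⟩,
    VD.sum _ I hI L β (fun q hq => ?_) (fun q hq => ?_) S₀ ⟨e₀.symm.trans e'⟩⟩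
  · simpa only [β, dif_pos hq] using Ordinal.lt_iSup_add_one α ⟨q, hq⟩
  · simpa only [β, L, dif_pos hq] using hS ⟨q, hq⟩

section

variable {L : Type} [LinearOrder L]

noncomputable def MonotoneOn.sigmaLexFibersOrderIso {ι : Type} [LinearOrder ι] {T : Set L}
    {f : L → ι} (hf : MonotoneOn f T) : (Σₗ i, ↥(T ∩ f ⁻¹' {i})) ≃o T :=
  StrictMono.orderIsoOfSurjective (fun p => ⟨(ofLex p).2, (ofLex p).2.2.1⟩)
    (by
      rintro ⟨i, x, hxT, hxi⟩ ⟨j, y, hyT, hyj⟩ (⟨_, _, hij⟩ | ⟨_, _, hxy⟩)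
      · subst hxi hyj
        exact lt_of_not_ge fun hyx => (hf hyT hxT hyx).not_gt hij
      · exact hxy)
    (fun t => ⟨toLex ⟨f t, t, t.2, rfl⟩, rfl⟩)

theorem IsVD.of_monotoneOn {ι : Type} [LinearOrder ι] (hι : GoodIndexType ι) {T : Set L}
    {f : L → ι} (hf : MonotoneOn f T) (hfib : ∀ i, IsVD ↥(T ∩ f ⁻¹' {i})) : IsVD T := by
  obtain ⟨I, hI, ⟨e⟩⟩ := hι.exists_goodIndex_orderIso
  have hfib' (q : I) : IsVD ↥(T ∩ (e ∘ f) ⁻¹' {q}) :=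
    (hfib (e.symm q)).of_orderIso (OrderIso.setCongr _ _ (by ext; simp [e.eq_symm_apply]))
  exact (IsVD.sigmaLex hI hfib').of_orderIso
    (e.monotone.comp_monotoneOn hf).sigmaLexFibersOrderIso

theorem IsVD.of_inter_of_diff {T : Set L} (s : Set L)
    (hlt : ∀ x ∈ T ∩ s, ∀ y ∈ T \ s, x < y)
    (hs : IsVD ↥(T ∩ s)) (hsc : IsVD ↥(T \ s)) : IsVD T := by
  refine IsVD.of_monotoneOn (ι := Prop) (Or.inr (Or.inr (Or.inr inferInstance)))
    (f := fun x => x ∉ s)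
    (fun x hx y hy hxy hxs hys => (hlt y ⟨hy, hys⟩ x ⟨hx, hxs⟩).not_ge hxy) fun p => ?_
  rcases Classical.propComplete p with rfl | rfl
  · exact hsc.of_orderIso (OrderIso.setCongr _ _ (by ext; simp))
  · exact hs.of_orderIso (OrderIso.setCongr _ _ (by ext; simp))

def HereditarilyVD (A : Set L) : Prop :=
  ∀ T ⊆ A, IsVD T

theorem HereditarilyVD.mono {A B : Set L} (h : HereditarilyVD B) (hAB : A ⊆ B) :
    HereditarilyVD A :=
  fun T hT => h T (hT.trans hAB)

theorem IsVD.of_cofinal {T : Set L} (g : ℕ → L) (hg : ∀ t ∈ T, ∃ n, t ≤ g n)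
    (hpiece : ∀ n, HereditarilyVD (T ∩ Iic (g n))) : IsVD T := by
  refine IsVD.of_monotoneOn (Or.inl ⟨OrderIso.refl ℕ⟩) (f := fun t => sInf {n | t ≤ g n})
    (fun s hs t ht hst => Nat.sInf_le (hst.trans (Nat.sInf_mem (hg t ht)))) fun n => ?_
  exact hpiece n _ fun t ⟨ht, htn⟩ => ⟨ht, htn ▸ Nat.sInf_mem (hg t ht)⟩

theorem IsVD.of_coinitial {T : Set L} (g : ℕ → L) (hg : ∀ t ∈ T, ∃ n, g n ≤ t)
    (hpiece : ∀ n, HereditarilyVD (T ∩ Ici (g n))) : IsVD T := by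
  refine IsVD.of_monotoneOn (Or.inr (Or.inl ⟨OrderIso.refl ℕᵒᵈ⟩))
    (f := fun t => OrderDual.toDual (sInf {n | g n ≤ t}))
    (fun s hs t ht hst => Nat.sInf_le (le_trans (Nat.sInf_mem (hg s hs)) hst)) fun n => ?_
  exact hpiece n.ofDual _ fun t ⟨ht, htn⟩ => ⟨ht, htn ▸ Nat.sInf_mem (hg t ht)⟩

def VDRel (a b : L) : Prop :=
  HereditarilyVD (uIcc a b)

namespace VDRel

theorem refl (a : L) : VDRel a a := fun _ hT =>
  have := (subsingleton_of_subset_singleton (uIcc_self (a := a) ▸ hT)).coe_sort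
  IsVD.of_subsingleton

theorem symm {a b : L} (h : VDRel a b) : VDRel b a := by
  rwa [VDRel, uIcc_comm]

theorem of_mem_uIcc {a b c : L} (h : VDRel a b) (hc : c ∈ uIcc a b) : VDRel a c :=
  HereditarilyVD.mono h (uIcc_subset_uIcc_left hc)

theorem trans {a b c : L} (hab : VDRel a b) (hbc : VDRel b c) : VDRel a c := by
  wlog hac : a ≤ c generalizing a c
  · exact (this hbc.symm hab.symm (le_of_not_ge hac)).symm
  intro T hT
  rw [uIcc_of_le hac] at hT
  refine IsVD.of_inter_of_diff (Iic b) (fun x hx y hy => hx.2.trans_lt (not_le.1 hy.2)) ?_ ?_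
  · exact hab _ fun z hz => Icc_subset_uIcc ⟨(hT hz.1).1, hz.2⟩
  · exact hbc _ fun z hz => Icc_subset_uIcc ⟨(not_le.1 hz.2).le, (hT hz.1).2⟩

end VDRel

def vdSetoid : Setoid L :=
  ⟨VDRel, ⟨VDRel.refl, VDRel.symm, VDRel.trans⟩⟩

variable [Countable L]

theorem IsVD.of_forall_vdRel {T : Set L} (hT : ∀ x ∈ T, ∀ y ∈ T, VDRel x y) : IsVD T := by
  rcases T.eq_empty_or_nonempty with rfl | ⟨x₀, hx₀⟩
  · exact IsVD.of_subsingleton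
  obtain ⟨g, rfl⟩ := T.to_countable.exists_eq_range ⟨x₀, hx₀⟩
  refine IsVD.of_inter_of_diff (Iio x₀) (fun x hx y hy => hx.2.trans_le (not_lt.1 hy.2)) ?_ ?_
  · refine IsVD.of_coinitial g (fun _ ⟨⟨n, hn⟩, _⟩ => ⟨n, hn.le⟩) fun n => ?_
    exact (hT x₀ hx₀ (g n) ⟨n, rfl⟩).mono fun z hz => Icc_subset_uIcc' ⟨hz.2, hz.1.2.le⟩
  · refine IsVD.of_cofinal g (fun _ ⟨⟨n, hn⟩, _⟩ => ⟨n, hn.ge⟩) fun n => ?_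
    exact (hT x₀ hx₀ (g n) ⟨n, rfl⟩).mono fun z hz =>
      Icc_subset_uIcc ⟨not_lt.1 hz.1.2, hz.2⟩

theorem exists_between_not_vdRel {x y : L} (hxy : x < y) (h : ¬VDRel x y) :
    ∃ z, x < z ∧ z < y ∧ ¬VDRel x z ∧ ¬VDRel z y := by
  by_contra! hmid
  refine h fun T hT => ?_
  rw [uIcc_of_lt hxy] at hT
  have hTy : ∀ z ∈ T \ {z | VDRel x z}, VDRel z y := fun z ⟨hzT, hxz⟩ => by
    rcases (hT hzT).2.eq_or_lt with rfl | hzy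
    · exact VDRel.refl z
    · refine hmid z ((hT hzT).1.lt_of_ne ?_) hzy hxz
      rintro rfl
      exact hxz (VDRel.refl x)
  refine IsVD.of_inter_of_diff {z | VDRel x z} (fun a ha b hb => lt_of_not_ge fun hba => ?_)
    (IsVD.of_forall_vdRel fun a ha b hb => ha.2.symm.trans hb.2)
    (IsVD.of_forall_vdRel fun a ha b hb => (hTy a ha).trans (hTy b hb).symm)
  exact hb.2 (ha.2.of_mem_uIcc (Icc_subset_uIcc ⟨(hT hb.1).1, hba⟩))

theorem exists_strictMono_rat_of_not_vdRel {a b : L} (hab : ¬VDRel a b) :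
    ∃ g : ℚ → L, StrictMono g := by
  let _ : Setoid L := vdSetoid
  let R := range (Quotient.out : Quotient vdSetoid → L)
  have eq_of_vdRel : ∀ r ∈ R, ∀ r' ∈ R, VDRel r r' → r = r' := by
    rintro _ ⟨q, rfl⟩ _ ⟨q', rfl⟩ h
    rw [← Quotient.out_eq q, ← Quotient.out_eq q', Quotient.sound h]
  have : Nontrivial R := ⟨⟨_, ⟦a⟧, rfl⟩, ⟨_, ⟦b⟧, rfl⟩, fun h =>
    hab (Quotient.exact (Quotient.out_injective (congrArg Subtype.val h) :
      (⟦a⟧ : Quotient vdSetoid) = ⟦b⟧))⟩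
  have : DenselyOrdered R := ⟨fun r r' hrr' => by
    have hne : ¬VDRel r.1 r'.1 := fun h => hrr'.ne (Subtype.ext (eq_of_vdRel _ r.2 _ r'.2 h))
    obtain ⟨z, hrz, hzr', hnrz, hnzr'⟩ :=
      exists_between_not_vdRel (Subtype.coe_lt_coe.2 hrr') hne
    have hzw : VDRel z (⟦z⟧ : Quotient vdSetoid).out := VDRel.symm (Quotient.mk_out z)
    refine ⟨⟨_, ⟦z⟧, rfl⟩, Subtype.coe_lt_coe.1 (lt_of_not_ge fun hwr => ?_),
      Subtype.coe_lt_coe.1 (lt_of_not_ge fun hr'w => ?_)⟩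
    · exact hnrz (hzw.of_mem_uIcc (Icc_subset_uIcc' ⟨hwr, hrz.le⟩)).symm
    · exact hnzr' (hzw.of_mem_uIcc (Icc_subset_uIcc ⟨hzr'.le, hr'w⟩))⟩
  obtain ⟨e⟩ := Order.embedding_from_countable_to_dense ℚ R
  exact ⟨fun q => e q, fun q q' h => e.strictMono h⟩

end

/-- Hausdorff: every countable scattered linear order belongs to the class VD of
(countable) very discrete linear orders. -/
theorem stmt7 (L : Type) [LinearOrder L] [Countable L]
    (hscat : ¬ ∃ g : ℚ → L, StrictMono g) :
    ∃ (α : Ordinal.{0}) (S : Set ℚ), Nonempty (L ≃o S) ∧ VD α S := by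
  have hrel (x y : L) : VDRel x y := by
    by_contra h
    exact hscat (exists_strictMono_rat_of_not_vdRel h)
  exact (IsVD.of_forall_vdRel (T := univ) fun x _ y _ => hrel x y).of_orderIso OrderIso.Set.univ
end

section
/- If L is a countable very discrete linear order (L ∈ VD), then L is scattered: L contains no suborder isomorphic to ℚ. -/
/-- "No copy of ℚ" predicate. -/
def NoQ (T : Type*) [Preorder T] : Prop := ¬ ∃ g : ℚ → T, StrictMono g

lemma noQ_of_iso {T U : Type*} [Preorder T] [Preorder U] (e : T ≃o U) (h : NoQ T) : NoQ U := by
  rintro ⟨g, hg⟩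
  exact h ⟨fun q => e.symm (g q), fun a b hab => e.symm.strictMono (hg hab)⟩

lemma noQ_locFin {T : Type*} [LinearOrder T] [LocallyFiniteOrder T] : NoQ T := by
  rintro ⟨g, hg⟩
  have h1 : (Set.Ioo (0 : ℚ) 1).Infinite := Set.Ioo_infinite (by norm_num)
  have h2 : g '' Set.Ioo 0 1 ⊆ Set.Icc (g 0) (g 1) := by
    rintro _ ⟨x, hx, rfl⟩
    exact ⟨(hg hx.1).le, (hg hx.2).le⟩
  exact (h1.image hg.injective.injOn) ((Set.finite_Icc (g 0) (g 1)).subset h2)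

lemma noQ_finite {T : Type*} [Preorder T] [Finite T] : NoQ T := by
  rintro ⟨g, hg⟩
  obtain ⟨x, y, hxy, he⟩ := Finite.exists_ne_map_eq_of_infinite g
  exact hxy (hg.injective he)

lemma sigma_snd_lt {ι : Type*} [LinearOrder ι] {L : ι → Type*} [∀ i, LinearOrder (L i)]
    {i : ι} {x y : Σₗ j, L j} (hx : (ofLex x).1 = i) (hy : (ofLex y).1 = i) (hxy : x < y) :
    (hx ▸ (ofLex x).2 : L i) < hy ▸ (ofLex y).2 := by
  obtain ⟨ix, ux⟩ := x; obtain ⟨iy, uy⟩ := y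
  obtain rfl : ix = i := hx
  obtain rfl : iy = ix := hy
  rcases Sigma.Lex.lt_def.1 hxy with h1 | ⟨h1, h2⟩
  · exact absurd h1 (lt_irrefl _)
  · exact h2

lemma noQ_sigma {ι : Type*} [LinearOrder ι] {L : ι → Type*} [∀ i, LinearOrder (L i)]
    (hι : NoQ ι) (hL : ∀ i, NoQ (L i)) : NoQ (Σₗ i, L i) := by
  rintro ⟨g, hg⟩
  set h : ℚ → ι := fun q => (ofLex (g q)).1 with hh
  have hmono : Monotone h := by
    intro a b hab
    rcases eq_or_lt_of_le hab with rfl | hab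
    · exact le_rfl
    rcases Sigma.Lex.lt_def.1 (hg hab) with h1 | ⟨h1, _⟩
    · exact h1.le
    · exact h1.le
  by_cases hc : ∃ a b : ℚ, a < b ∧ h a = h b
  · obtain ⟨a, b, hab, heq⟩ := hc
    set f := orderIsoIooNegOneOne ℚ with hf
    set e : ℚ → ℚ := fun q => a + (b - a) * (((f q : ℚ)) + 1) / 2 with he
    have hemem : ∀ q, e q ∈ Set.Ioo a b := by
      intro q
      have h1 := (f q).2.1
      have h2 := (f q).2.2
      constructor <;> simp only [he] <;> nlinarith
    have hemono : StrictMono e := by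
      intro x y hxy
      have : (f x : ℚ) < f y := f.strictMono hxy
      simp only [he]
      nlinarith
    have hconst : ∀ q, h (e q) = h a := by
      intro q
      refine le_antisymm ?_ (hmono (hemem q).1.le)
      calc h (e q) ≤ h b := hmono (hemem q).2.le
        _ = h a := heq.symm
    refine hL (h a) ⟨fun q => (hconst q) ▸ (ofLex (g (e q))).2, ?_⟩
    intro x y hxy
    exact sigma_snd_lt (hconst x) (hconst y) (hg (hemono hxy))
  · push_neg at hc
    refine hι ⟨h, fun x y hxy => ?_⟩
    exact lt_of_le_of_ne (hmono hxy.le) (hc x y hxy)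

/-- Every countable very discrete linear order (a member of VD) is scattered:
it contains no suborder isomorphic to ℚ. -/
theorem stmt8 (α : Ordinal.{0}) (S : Set ℚ) (h : VD α S) :
    ¬ ∃ g : ℚ → S, StrictMono g := by
  induction h with
  | empty => rintro ⟨g, hg⟩; exact (g 0).2
  | single q =>
    rintro ⟨g, hg⟩
    have h01 := hg (show (0 : ℚ) < 1 by norm_num)
    have : g 0 = g 1 := Subtype.ext ((g 0).2.trans (g 1).2.symm)
    exact absurd h01 (by simp [this])
  | sum α I hI L β hβ hvd S hiso ih =>
    obtain ⟨e⟩ := hiso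
    have hι : NoQ I := by
      rcases hI with ⟨⟨f⟩⟩ | ⟨⟨f⟩⟩ | ⟨⟨f⟩⟩ | hfin
      · exact noQ_of_iso f.symm noQ_locFin
      · exact noQ_of_iso f.symm noQ_locFin
      · exact noQ_of_iso f.symm noQ_locFin
      · have := hfin.to_subtype; exact noQ_finite
    exact noQ_of_iso e.symm (noQ_sigma hι fun i => ih i.1 i.2)
end

section
/- (Hausdorff) Every linear order L is a dense sum of scattered linear orders: there exists a dense linear order L* and an assignment i ↦ h(i) of scattered linear orders to elements of L* such that L is order-isomorphic to the ordered sum Σ_{i ∈ L*} h(i). -/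
/-! Call `x` and `y` equivalent when the closed interval between them is scattered. Since the
union of two scattered sets is scattered, this is an equivalence relation whose classes are
convex, and each class is scattered: a copy of `ℚ` inside a class lies in the interval between
two of its points. The order of the classes is dense, because if no class lies strictly between
the classes of `x < y`, then `[x, y]` is covered by these two classes and is therefore scattered. -/

open Set

theorem exists_strictMono_mem_of_dense {D : Set ℚ} {a b : ℚ} (hab : a < b)
    (hD : ∀ c d, a ≤ c → c < d → d ≤ b → ∃ q ∈ D, q ∈ Ioo c d) :
    ∃ g : ℚ → ℚ, StrictMono g ∧ ∀ q, g q ∈ D := by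
  let E := D ∩ Ioo a b
  have : DenselyOrdered E := ⟨fun x y hxy => by
    obtain ⟨q, hqD, hq⟩ := hD x y x.2.2.1.le hxy y.2.2.2.le
    exact ⟨⟨q, hqD, x.2.2.1.trans hq.1, hq.2.trans y.2.2.2⟩, hq.1, hq.2⟩⟩
  have : Nontrivial E := by
    obtain ⟨q₁, hq₁D, hq₁⟩ := hD a b le_rfl hab le_rfl
    obtain ⟨q₂, hq₂D, hq₂⟩ := hD q₁ b hq₁.1.le hq₁.2 le_rfl
    exact ⟨⟨q₁, hq₁D, hq₁⟩, ⟨q₂, hq₂D, hq₁.1.trans hq₂.1, hq₂.2⟩,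
      fun h => hq₂.1.ne (congrArg Subtype.val h)⟩
  obtain ⟨e⟩ := Order.embedding_from_countable_to_dense ℚ E
  exact ⟨fun q => e q, fun _ _ h => e.strictMono h, fun q => (e q).2.1⟩

theorem exists_strictMono_mem_Ioo {a b : ℚ} (hab : a < b) :
    ∃ g : ℚ → ℚ, StrictMono g ∧ ∀ q, g q ∈ Ioo a b :=
  exists_strictMono_mem_of_dense hab fun _ _ hc hcd hd =>
    let ⟨q, hq⟩ := exists_between hcd
    ⟨q, ⟨hc.trans_lt hq.1, hq.2.trans_le hd⟩, hq⟩

namespace Set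

variable {L : Type*} [LinearOrder L] {s t : Set L}

def Scattered (s : Set L) : Prop :=
  ¬ ∃ f : ℚ → L, StrictMono f ∧ ∀ q, f q ∈ s

theorem Scattered.mono (h : s ⊆ t) (ht : t.Scattered) : s.Scattered :=
  fun ⟨f, hf, hfs⟩ => ht ⟨f, hf, fun q => h (hfs q)⟩

theorem Subsingleton.scattered (h : s.Subsingleton) : s.Scattered :=
  fun ⟨_, hf, hfs⟩ => (hf (zero_lt_one' ℚ)).ne (h (hfs 0) (hfs 1))

/-- Either `f⁻¹' t` is dense in `ℚ`, and then contains a copy of `ℚ`, or some interval of `ℚ`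
is mapped into `s`. -/
theorem Scattered.union (hs : s.Scattered) (ht : t.Scattered) : (s ∪ t).Scattered := by
  rintro ⟨f, hf, hfst⟩
  by_cases hdense : ∀ c d : ℚ, c < d → ∃ q ∈ f ⁻¹' t, q ∈ Ioo c d
  · obtain ⟨g, hg, hgt⟩ :=
      exists_strictMono_mem_of_dense zero_lt_one fun c d _ hcd _ => hdense c d hcd
    exact ht ⟨f ∘ g, hf.comp hg, hgt⟩
  · push Not at hdense
    obtain ⟨c, d, hcd, hnt⟩ := hdense
    obtain ⟨g, hg, hgI⟩ := exists_strictMono_mem_Ioo hcd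
    exact hs ⟨f ∘ g, hf.comp hg, fun q => (hfst (g q)).resolve_right fun hq => hnt (g q) hq (hgI q)⟩

theorem scattered_of_forall_Icc (h : ∀ a ∈ s, ∀ b ∈ s, a < b → (Icc a b).Scattered) :
    s.Scattered := by
  rintro ⟨f, hf, hfs⟩
  obtain ⟨g, hg, hgI⟩ := exists_strictMono_mem_Ioo (zero_lt_one' ℚ)
  exact h _ (hfs 0) _ (hfs 1) (hf zero_lt_one)
    ⟨f ∘ g, hf.comp hg, fun q => ⟨(hf (hgI q).1).le, (hf (hgI q).2).le⟩⟩

end Set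

variable {L : Type*} [LinearOrder L] {x y z : L}

def ScatteredBetween (x y : L) : Prop := (uIcc x y).Scattered

namespace ScatteredBetween

theorem refl (x : L) : ScatteredBetween x x := by
  simpa only [ScatteredBetween, uIcc_self] using subsingleton_singleton.scattered

theorem symm (h : ScatteredBetween x y) : ScatteredBetween y x := by
  rwa [ScatteredBetween, uIcc_comm]

theorem trans (hxy : ScatteredBetween x y) (hyz : ScatteredBetween y z) : ScatteredBetween x z :=
  (hxy.union hyz).mono uIcc_subset_uIcc_union_uIcc

theorem of_mem_uIcc (hxz : ScatteredBetween x z) (hy : y ∈ uIcc x z) : ScatteredBetween x y :=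
  hxz.mono (uIcc_subset_uIcc_left hy)

end ScatteredBetween

theorem scattered_setOf_scatteredBetween (x : L) : {y | ScatteredBetween x y}.Scattered :=
  scattered_of_forall_Icc fun a ha b hb hab => by
    simpa only [ScatteredBetween, uIcc_of_le hab.le] using ha.symm.trans hb

/-- The class of `x` under `ScatteredBetween`, represented by its downward closure. -/
def condensation (x : L) : LowerSet L := lowerClosure {y | ScatteredBetween x y}

theorem condensation_eq_iff : condensation x = condensation y ↔ ScatteredBetween x y := by
  refine ⟨fun h => ?_, fun h => congrArg lowerClosure <| ext fun z =>
    ⟨h.symm.trans, h.trans⟩⟩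
  wlog hxy : x ≤ y generalizing x y
  · exact (this h.symm (le_of_not_ge hxy)).symm
  have hy : y ∈ condensation x := h ▸ subset_lowerClosure (ScatteredBetween.refl y)
  obtain ⟨z, hxz, hyz⟩ := mem_lowerClosure.1 hy
  exact ScatteredBetween.of_mem_uIcc hxz (mem_uIcc_of_le hxy hyz)

theorem monotone_condensation : Monotone (condensation : L → LowerSet L) := by
  intro x y hxy
  refine lowerClosure_le.2 fun z hxz => mem_lowerClosure.2 ?_
  rcases le_total z y with hzy | hyz
  · exact ⟨y, ScatteredBetween.refl y, hzy⟩
  · exact ⟨z, (hxz.of_mem_uIcc (mem_uIcc_of_le hxy hyz)).symm.trans hxz, le_rfl⟩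

theorem exists_condensation_between (h : condensation x < condensation y) :
    ∃ z, condensation x < condensation z ∧ condensation z < condensation y := by
  have hxy : x ≤ y := (monotone_condensation.reflect_lt h).le
  have hnot : ¬ ScatteredBetween x y := fun hs => h.ne (condensation_eq_iff.2 hs)
  obtain ⟨z, hz, hxz, hzy⟩ :
      ∃ z ∈ Icc x y, ¬ ScatteredBetween x z ∧ ¬ ScatteredBetween y z := by
    by_contra! hall
    refine hnot (((scattered_setOf_scatteredBetween x).union
      (scattered_setOf_scatteredBetween y)).mono ?_)
    rw [uIcc_of_le hxy]
    intro z hz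
    by_cases hxz : ScatteredBetween x z
    · exact Or.inl hxz
    · exact Or.inr (hall z hz hxz)
  exact ⟨z, (monotone_condensation hz.1).lt_of_ne (mt condensation_eq_iff.1 hxz),
    (monotone_condensation hz.2).lt_of_ne fun h => hzy (condensation_eq_iff.1 h.symm)⟩

theorem scattered_setOf_condensation_eq (x : L) :
    {y | condensation y = condensation x}.Scattered :=
  (scattered_setOf_scatteredBetween x).mono fun _ hy => (condensation_eq_iff.1 hy).symm

/-- Hausdorff: every linear order is a dense sum of scattered linear orders.
Formally: there is a dense linear order `I` and a monotone surjection `p : L → I`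
whose fibers (the summands, so that `L = Σ_{i ∈ I} p⁻¹(i)` as an ordered sum)
are all scattered (contain no copy of `ℚ`). -/
theorem stmt9 (L : Type u) [LinearOrder L] :
    ∃ (I : Type u) (instI : LinearOrder I),
      @DenselyOrdered I instI.toLT ∧
      ∃ p : L → I,
        @Monotone L I _ instI.toPreorder p ∧
        Function.Surjective p ∧
        ∀ i : I, ¬ ∃ g : ℚ → {x : L // p x = i}, StrictMono g := by
  refine ⟨range (condensation : L → LowerSet L), inferInstance, ⟨?_⟩,
    rangeFactorization condensation, fun _ _ h => monotone_condensation h,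
    rangeFactorization_surjective, ?_⟩
  · rintro ⟨_, x, rfl⟩ ⟨_, y, rfl⟩ h
    obtain ⟨z, hxz, hzy⟩ := exists_condensation_between h
    exact ⟨⟨_, z, rfl⟩, hxz, hzy⟩
  · rintro ⟨_, x, rfl⟩ ⟨g, hg⟩
    exact scattered_setOf_condensation_eq x
      ⟨fun q => (g q).1, hg, fun q => congrArg Subtype.val (g q).2⟩
end

section
/- Let (X, f) be a compact metric dynamical system with f continuous, and suppose x, y ∈ X satisfy the chain relation x 𝒞 y (for every ε > 0 there is an ε-chain from x to y). Then there exists a sequence ε_n ↓ 0 and a sequence of ε_n-chains C_n from x to y with nested supports: the set of points of C_n is contained in the set of points of C_{n+1} for all n. -/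
/-- `C 0, C 1, …, C m` is an ε-chain for `f` from `x` to `y`. -/
def IsEpsChain {X : Type*} [MetricSpace X] (f : X → X) (ε : ℝ) (C : ℕ → X) (m : ℕ)
    (x y : X) : Prop :=
  1 ≤ m ∧ C 0 = x ∧ C m = y ∧ ∀ i < m, dist (f (C i)) (C (i + 1)) < ε

/-- The support (set of points) of the chain `C 0, …, C m`. -/
def chainSupport {X : Type*} (C : ℕ → X) (m : ℕ) : Set X := {p | ∃ i ≤ m, C i = p}

open Metric TopologicalSpace Filter Set

lemma chainSupport_eq_image {X : Type*} [DecidableEq X] (C : ℕ → X) (m : ℕ) :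
    chainSupport C m = ↑((Finset.Iic m).image C) := by
  ext p
  simp [chainSupport, Finset.mem_image, Finset.mem_Iic]

lemma exists_sep {X : Type*} [MetricSpace X] (F : Finset X) (x y : X) :
    ∃ μ > 0, ∀ p ∈ F, (p ≠ x → μ ≤ dist p x) ∧ (p ≠ y → μ ≤ dist p y) ∧
      ∀ q ∈ F, q ≠ p → μ ≤ dist p q := by
  classical
  induction F using Finset.induction_on with
  | empty => exact ⟨1, one_pos, by simp⟩
  | @insert a s ha ih =>
    obtain ⟨μ, hμ, hsep⟩ := ih
    have hν : ∃ ν > 0, ∀ q ∈ s, ν ≤ dist a q := by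
      rcases s.eq_empty_or_nonempty with rfl | hs
      · exact ⟨1, one_pos, by simp⟩
      · refine ⟨infDist a ↑s, ?_, fun q hq => infDist_le_dist_of_mem (by exact_mod_cast hq)⟩
        exact ((s.finite_toSet.isClosed).notMem_iff_infDist_pos (by exact_mod_cast hs)).mp
          (by exact_mod_cast ha)
    obtain ⟨ν, hν0, hνle⟩ := hν
    set dx : ℝ := if a = x then 1 else dist a x with hdx
    set dy : ℝ := if a = y then 1 else dist a y with hdy
    have hdx0 : 0 < dx := by
      rw [hdx]; split_ifs with h
      · exact one_pos
      · exact dist_pos.2 h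
    have hdy0 : 0 < dy := by
      rw [hdy]; split_ifs with h
      · exact one_pos
      · exact dist_pos.2 h
    refine ⟨min (min μ ν) (min dx dy), by positivity, ?_⟩
    intro p hp
    rcases Finset.mem_insert.mp hp with rfl | hp
    · refine ⟨?_, ?_, ?_⟩
      · intro hpx
        refine le_trans (le_trans (min_le_right _ _) (min_le_left _ _)) ?_
        rw [hdx, if_neg hpx]
      · intro hpy
        refine le_trans (le_trans (min_le_right _ _) (min_le_right _ _)) ?_
        rw [hdy, if_neg hpy]
      · intro q hq hqp
        rcases Finset.mem_insert.mp hq with rfl | hq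
        · exact absurd rfl hqp
        · calc min (min μ ν) (min dx dy) ≤ ν := le_trans (min_le_left _ _) (min_le_right _ _)
            _ ≤ dist p q := hνle q hq
    · obtain ⟨h1, h2, h3⟩ := hsep p hp
      have hps : p ∈ s := hp
      have hm : min (min μ ν) (min dx dy) ≤ μ := le_trans (min_le_left _ _) (min_le_left _ _)
      refine ⟨fun h => le_trans hm (h1 h), fun h => le_trans hm (h2 h), ?_⟩
      intro q hq hqp
      rcases Finset.mem_insert.mp hq with h | hq
      · subst h
        rw [dist_comm]
        exact le_trans (le_trans (min_le_left _ _) (min_le_right _ _)) (hνle p hps)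
      · exact le_trans hm (h3 q hq hqp)

/-- In a compact metric system with `f` continuous, if `x 𝒞 y` (for every `ε > 0`
there is an ε-chain from `x` to `y`), then there are `ε_n ↓ 0` and `ε_n`-chains
`C_n` from `x` to `y` with nested supports. -/
theorem stmt10 {X : Type*} [MetricSpace X] [CompactSpace X]
    (f : X → X) (hf : Continuous f) (x y : X)
    (hxy : ∀ ε : ℝ, 0 < ε → ∃ (C : ℕ → X) (m : ℕ), IsEpsChain f ε C m x y) :
    ∃ (ε : ℕ → ℝ) (C : ℕ → ℕ → X) (m : ℕ → ℕ),
      (∀ n, 0 < ε n) ∧ StrictAnti ε ∧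
      Filter.Tendsto ε Filter.atTop (nhds 0) ∧
      (∀ n, IsEpsChain f (ε n) (C n) (m n) x y) ∧
      (∀ n, chainSupport (C n) (m n) ⊆ chainSupport (C (n + 1)) (m (n + 1))) := by
  classical
  have hchain : ∀ k : ℕ, ∃ (C : ℕ → X) (m : ℕ), IsEpsChain f (1/(k+1)) C m x y :=
    fun k => hxy _ (by positivity)
  choose E m hE using hchain
  have hfin : ∀ k, (chainSupport (E k) (m k)).Finite := fun k => by
    rw [chainSupport_eq_image]; exact Finset.finite_toSet _
  have hxmem : ∀ k, x ∈ chainSupport (E k) (m k) := fun k => ⟨0, Nat.zero_le _, (hE k).2.1⟩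
  have hymem : ∀ k, y ∈ chainSupport (E k) (m k) := fun k => ⟨m k, le_refl _, (hE k).2.2.1⟩
  let S : ℕ → NonemptyCompacts X := fun k =>
    ⟨⟨chainSupport (E k) (m k), (hfin k).isCompact⟩, ⟨x, hxmem k⟩⟩
  obtain ⟨K, -, φ, hφ, hconv⟩ := isCompact_univ.tendsto_subseq (fun k => Set.mem_univ (S k))
  have hScoe : ∀ k, (S k : Set X) = chainSupport (E k) (m k) := fun k => rfl
  have hfe : ∀ (A B : NonemptyCompacts X), EMetric.hausdorffEdist (A : Set X) (B : Set X) ≠ ⊤ :=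
    fun A B => hausdorffEdist_ne_top_of_nonempty_of_bounded A.nonempty B.nonempty
      A.isCompact.isBounded B.isCompact.isBounded
  have hdist : ∀ η > (0:ℝ), ∃ N, ∀ j ≥ N, hausdorffDist (S (φ j) : Set X) (K : Set X) < η := by
    intro η hη
    obtain ⟨N, hN⟩ := (Metric.tendsto_atTop.mp hconv) η hη
    exact ⟨N, fun j hj => by simpa [NonemptyCompacts.dist_eq] using hN j hj⟩
  have hmemK : ∀ z : X, (∀ k, z ∈ chainSupport (E k) (m k)) → z ∈ (K : Set X) := by
    intro z hz
    rw [K.isCompact.isClosed.mem_iff_infDist_zero K.nonempty]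
    have hlt : ∀ η > (0:ℝ), infDist z (K : Set X) < η := by
      intro η hη
      obtain ⟨N, hN⟩ := hdist η hη
      exact lt_of_le_of_lt
        (infDist_le_hausdorffDist_of_mem (by rw [hScoe]; exact hz (φ N)) (hfe _ _))
        (hN N le_rfl)
    rcases eq_or_lt_of_le (infDist_nonneg (x := z) (s := (K : Set X))) with h | h
    · exact h.symm
    · exact absurd (hlt _ h) (lt_irrefl _)
  have hxK : x ∈ (K : Set X) := hmemK x hxmem
  have hyK : y ∈ (K : Set X) := hmemK y hymem
  -- the key perturbation lemma
  have key : ∀ ε > (0:ℝ), ∀ F : Finset X, ↑F ⊆ (K : Set X) →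
      ∃ (C' : ℕ → X) (m' : ℕ), IsEpsChain f ε C' m' x y ∧
        chainSupport C' m' ⊆ (K : Set X) ∧ ↑F ⊆ chainSupport C' m' := by
    intro ε hε F hF
    obtain ⟨δ₀, hδ₀, hδ₀f⟩ := Metric.uniformContinuous_iff.mp
      (CompactSpace.uniformContinuous_of_continuous hf) (ε/3) (by linarith)
    obtain ⟨μ, hμ, hsep⟩ := exists_sep F x y
    set δ : ℝ := min (min δ₀ (ε/3)) (μ/2) with hδdef
    have hδpos : 0 < δ := by positivity
    have hδ1 : δ ≤ δ₀ := le_trans (min_le_left _ _) (min_le_left _ _)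
    have hδ2 : δ ≤ ε/3 := le_trans (min_le_left _ _) (min_le_right _ _)
    have hδ3 : δ ≤ μ/2 := min_le_right _ _
    obtain ⟨N, hN⟩ := hdist δ hδpos
    obtain ⟨N2, hN2⟩ := exists_nat_one_div_lt (show (0:ℝ) < ε/3 by linarith)
    set j := max N N2 with hjdef
    set k := φ j with hkdef
    have hH : hausdorffDist (S k : Set X) (K : Set X) < δ := hN j (le_max_left _ _)
    have hjk : N2 ≤ k := le_trans (le_max_right N N2) (hφ.le_apply)
    have hstep : ∀ i < m k, dist (f (E k i)) (E k (i+1)) < ε/3 := by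
      intro i hi
      refine lt_of_lt_of_le ((hE k).2.2.2 i hi) (le_trans ?_ (le_of_lt hN2))
      apply one_div_le_one_div_of_le
      · positivity
      · have : (N2:ℝ) ≤ k := by exact_mod_cast hjk
        linarith
    -- projections to K
    have proj : ∀ i : ℕ, ∃ q, q ∈ (K : Set X) ∧ (i ≤ m k → dist (E k i) q < δ) := by
      intro i
      by_cases hi : i ≤ m k
      · obtain ⟨q, hq, hd⟩ := exists_dist_lt_of_hausdorffDist_lt
          (show E k i ∈ (S k : Set X) from ⟨i, hi, rfl⟩) hH (hfe _ _)
        exact ⟨q, hq, fun _ => hd⟩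
      · exact ⟨x, hxK, fun h => absurd h hi⟩
    choose pk hpkK hpkd using proj
    -- assignment of interior indices to points of F
    have assign : ∀ p : X, ∃ i, (p ∈ F ∧ p ≠ x ∧ p ≠ y) →
        (0 < i ∧ i < m k ∧ dist p (E k i) < δ) := by
      intro p
      by_cases hp : p ∈ F ∧ p ≠ x ∧ p ≠ y
      · obtain ⟨hpF, hpx, hpy⟩ := hp
        obtain ⟨q, hq, hd⟩ := exists_dist_lt_of_hausdorffDist_lt' (hF hpF) hH (hfe _ _)
        obtain ⟨i, him, hiq⟩ := hq
        have hdpq : dist p (E k i) < δ := by rw [hiq, dist_comm]; exact hd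
        have hi0 : 0 < i := by
          rcases Nat.eq_zero_or_pos i with rfl | h
          · exfalso
            have : E k 0 = x := (hE k).2.1
            have h1 := (hsep p hpF).1 hpx
            rw [this] at hdpq
            linarith
          · exact h
        have him' : i < m k := by
          rcases lt_or_eq_of_le him with h | h
          · exact h
          · exfalso
            have : E k i = y := by rw [h]; exact (hE k).2.2.1
            have h1 := (hsep p hpF).2.1 hpy
            rw [this] at hdpq
            linarith
        exact ⟨i, fun _ => ⟨hi0, him', hdpq⟩⟩
      · exact ⟨0, fun h => absurd h hp⟩
    choose g hg using assign
    -- the new chain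
    set P : X → Prop := fun p => p ∈ F ∧ p ≠ x ∧ p ≠ y with hP
    set r : ℕ → X := fun i =>
      if h : ∃ p, P p ∧ g p = i then h.choose
      else if i = 0 then x else if i = m k then y else pk i with hr
    have hr0 : r 0 = x := by
      rw [hr]
      have : ¬ ∃ p, P p ∧ g p = 0 := by
        rintro ⟨p, hp, hgp⟩
        exact absurd hgp (Nat.pos_iff_ne_zero.mp (hg p hp).1)
      simp [this]
    have hrm : r (m k) = y := by
      rw [hr]
      have h1 : ¬ ∃ p, P p ∧ g p = m k := by
        rintro ⟨p, hp, hgp⟩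
        exact absurd hgp (Nat.ne_of_lt (hg p hp).2.1)
      have h2 : m k ≠ 0 := Nat.pos_iff_ne_zero.mp (hE k).1
      simp [h1, h2]
    have hclose : ∀ i ≤ m k, dist (E k i) (r i) < δ ∨ dist (E k i) (r i) = 0 := by
      intro i hi
      rw [hr]
      by_cases h : ∃ p, P p ∧ g p = i
      · left
        simp only [dif_pos h]
        obtain ⟨hp, hgp⟩ := h.choose_spec
        have := (hg _ hp).2.2
        rw [hgp] at this
        rw [dist_comm]
        exact this
      · simp only [dif_neg h]
        by_cases h0 : i = 0
        · right; subst h0; simp [(hE k).2.1]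
        · by_cases hm' : i = m k
          · right; subst hm'; simp [h0, (hE k).2.2.1]
          · left; simp only [if_neg h0, if_neg hm']; exact hpkd i hi
    have hrK : ∀ i ≤ m k, r i ∈ (K : Set X) := by
      intro i hi
      rw [hr]
      by_cases h : ∃ p, P p ∧ g p = i
      · simp only [dif_pos h]
        exact hF h.choose_spec.1.1
      · simp only [dif_neg h]
        by_cases h0 : i = 0
        · rw [if_pos h0]; exact hxK
        · by_cases hm' : i = m k
          · rw [if_neg h0, if_pos hm']; exact hyK
          · rw [if_neg h0, if_neg hm']; exact hpkK i
    refine ⟨r, m k, ⟨(hE k).1, hr0, hrm, ?_⟩, ?_, ?_⟩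
    · -- chain steps
      intro i hi
      have c1 : dist (r i) (E k i) < δ₀ := by
        rcases hclose i (le_of_lt hi) with h | h
        · rw [dist_comm]; exact lt_of_lt_of_le h hδ1
        · rw [dist_comm, h]; exact hδ₀
      have c2 : dist (f (r i)) (f (E k i)) < ε/3 := hδ₀f c1
      have c3 : dist (f (E k i)) (E k (i+1)) < ε/3 := hstep i hi
      have c4 : dist (E k (i+1)) (r (i+1)) ≤ ε/3 := by
        rcases hclose (i+1) hi with h | h
        · exact le_trans (le_of_lt h) hδ2
        · rw [h]; linarith
      calc dist (f (r i)) (r (i+1))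
          ≤ dist (f (r i)) (f (E k i)) + dist (f (E k i)) (E k (i+1))
            + dist (E k (i+1)) (r (i+1)) := dist_triangle4 _ _ _ _
        _ < ε/3 + ε/3 + ε/3 := by linarith
        _ = ε := by ring
    · -- support ⊆ K
      rintro z ⟨i, hi, rfl⟩
      exact hrK i hi
    · -- F ⊆ support
      intro p hp
      have hpF : p ∈ F := hp
      by_cases hpx : p = x
      · exact ⟨0, Nat.zero_le _, by rw [hr0, hpx]⟩
      · by_cases hpy : p = y
        · exact ⟨m k, le_refl _, by rw [hrm, hpy]⟩
        · have hPp : P p := ⟨hpF, hpx, hpy⟩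
          refine ⟨g p, le_of_lt (hg p hPp).2.1, ?_⟩
          rw [hr]
          have h : ∃ q, P q ∧ g q = g p := ⟨p, hPp, rfl⟩
          simp only [dif_pos h]
          obtain ⟨hq, hgq⟩ := h.choose_spec
          by_contra hne
          have h1 := (hg _ hq).2.2
          rw [hgq] at h1
          have h2 := (hg p hPp).2.2
          have hd : dist h.choose p ≤ dist h.choose (E k (g p)) + dist (E k (g p)) p := dist_triangle _ _ _
          rw [dist_comm (E k (g p)) p] at hd
          have hsep' := (hsep p hpF).2.2 h.choose hq.1 hne
          rw [dist_comm] at hsep'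
          have : dist h.choose p < μ := by
            have := lt_of_le_of_lt hd (by linarith : dist h.choose (E k (g p)) + dist p (E k (g p)) < 2*δ)
            linarith
          linarith
  -- recursion
  let T : ℕ → Type _ := fun n =>
    {p : (ℕ → X) × ℕ // IsEpsChain f ((1/2:ℝ)^n) p.1 p.2 x y ∧
      chainSupport p.1 p.2 ⊆ (K : Set X)}
  have base : T 0 := by
    have h := key 1 one_pos ∅ (by simp)
    exact ⟨(h.choose, h.choose_spec.choose),
      by simpa using h.choose_spec.choose_spec.1, h.choose_spec.choose_spec.2.1⟩
  have step : ∀ n (p : T n), ∃ q : T (n+1),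
      chainSupport p.1.1 p.1.2 ⊆ chainSupport q.1.1 q.1.2 := by
    intro n p
    obtain ⟨C', m', h1, h2, h3⟩ := key ((1/2:ℝ)^(n+1)) (by positivity)
      ((Finset.Iic p.1.2).image p.1.1) (by rw [← chainSupport_eq_image]; exact p.2.2)
    refine ⟨⟨(C', m'), h1, h2⟩, ?_⟩
    rw [chainSupport_eq_image p.1.1]
    exact h3
  choose st hst using step
  let g : ∀ n, T n := fun n => Nat.rec base (fun n p => st n p) n
  refine ⟨fun n => (1/2:ℝ)^n, fun n => (g n).1.1, fun n => (g n).1.2, ?_, ?_, ?_, ?_, ?_⟩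
  · intro n; positivity
  · exact fun a b hab => pow_lt_pow_right_of_lt_one₀ (by norm_num) (by norm_num) hab
  · exact tendsto_pow_atTop_nhds_zero_of_lt_one (by norm_num) (by norm_num)
  · exact fun n => (g n).2.1
  · intro n
    exact hst n (g n)
end

section
/- Let (X, f) be a compact metric dynamical system with f a transitive homeomorphism, X without isolated points. Suppose x, y ∈ X have dense forward and backward orbits and disjoint two-sided orbits, and let k ∈ ℕ. Then there exists a strictly increasing sequence (h_n) of natural numbers and a sequence of 1/n-chains C_n : x, f(x), …, f^{h_n}(x), f^{-k}(y), …, f^{-1}(y), y from x to y such that each C_n is acyclic, the supports are nested (support(C_n) ⊆ support(C_{n+1})), and the union of supports minus {x, y} equals {f^m(x) : m ≥ 1} ∪ {f^{-k}(y), …, f^{-1}(y)}. -/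
/-- The chain `C 0, …, C m` contains a cyclic sub-chain. -/
def HasCyclicSubchain {X : Type*} (C : ℕ → X) (m : ℕ) : Prop :=
  (∃ i j, 1 ≤ i ∧ i < m ∧ 1 ≤ j ∧ j < m ∧ i ≠ j ∧ C i = C j) ∨
  (∃ i, 1 ≤ i ∧ i < m ∧ (C i = C 0 ∨ C i = C m))

/-- The two-sided orbit `O(x) = {f^k(x) : k ∈ ℤ}`. -/
def orbitZ {X : Type*} (F : Equiv.Perm X) (x : X) : Set X := {y | ∃ k : ℤ, (F ^ k) x = y}

/-!
Since the forward orbit of `x` is dense and `X` has no isolated points, `f^(i+1) x` comes within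
any `ε` of `f^(-k) y` for infinitely many `i`; picking such `h_n` increasing with `ε = 1/(n+1)`,
the chain `x, …, f^(h_n) x, f^(-k) y, …, y` is a true orbit segment except for that single jump.
Dense orbits in a space without isolated points are not periodic, so the two orbit pieces are
injective, and they are disjoint, which makes every chain acyclic.
-/

open Filter Function Topology

section Orbits

variable {X : Type*} [TopologicalSpace X] [T1Space X] [∀ p : X, (𝓝[≠] p).NeBot]

theorem DenseRange.frequently_mem {u : ℕ → X} (hu : DenseRange u) {U : Set X} (hU : IsOpen U)
    (hne : U.Nonempty) : ∃ᶠ i in atTop, u i ∈ U := by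
  rw [Nat.frequently_atTop_iff_infinite]
  intro hfin
  obtain ⟨_, hpU, ⟨i, rfl⟩, hi⟩ := (hu.sdiff_finite (hfin.image u)).inter_open_nonempty U hU hne
  exact hi ⟨i, hpU, rfl⟩

-- A periodic orbit is finite, and finite sets are not dense when no point is isolated.
theorem injective_zpow_apply_of_denseRange {F : Equiv.Perm X} {x : X}
    (hx : DenseRange fun i : ℕ => (F ^ (i : ℤ)) x) : Injective fun i : ℤ => (F ^ i) x := by
  intro a b (hab : (F ^ a) x = (F ^ b) x)
  have hfix : F ^ (-a + b) • x = x := by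
    rw [zpow_add, mul_smul, Equiv.Perm.smul_def, Equiv.Perm.smul_def, ← hab,
      ← Equiv.Perm.mul_apply, ← zpow_add, neg_add_cancel, zpow_zero, Equiv.Perm.one_apply]
  have hdvd := MulAction.zpow_smul_eq_iff_period_dvd.1 hfix
  by_contra hne
  have hp : MulAction.period F x ≠ 0 := by
    rintro hp
    rw [hp, Nat.cast_zero, zero_dvd_iff] at hdvd
    omega
  have hsub : Set.range (fun i : ℕ => (F ^ (i : ℤ)) x) ⊆
      (fun i : ℕ => (F ^ (i : ℤ)) x) '' Set.Iio (MulAction.period F x) := by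
    rintro _ ⟨i, rfl⟩
    refine ⟨i % MulAction.period F x, Nat.mod_lt _ (Nat.pos_of_ne_zero hp), ?_⟩
    simpa only [zpow_natCast, Equiv.Perm.smul_def] using
      MulAction.pow_mod_period_smul i (m := F) (a := x)
  have hfin : (Set.range fun i : ℕ => (F ^ (i : ℤ)) x).Finite :=
    ((Set.finite_Iio _).image _).subset hsub
  have hempty := hx.sdiff_finite hfin
  rw [sdiff_self] at hempty
  have : Nonempty X := ⟨x⟩
  exact hempty.nonempty.ne_empty rfl

end Orbits

theorem DenseRange.exists_strictMono_dist_succ_lt {X : Type*} [MetricSpace X]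
    [∀ p : X, (𝓝[≠] p).NeBot] {u : ℕ → X} (hu : DenseRange u) (z : X) {ε : ℕ → ℝ}
    (hε : ∀ n, 0 < ε n) : ∃ h : ℕ → ℕ, StrictMono h ∧ ∀ n, dist (u (h n + 1)) z < ε n := by
  refine extraction_forall_of_frequently (P := fun n i => dist (u (i + 1)) z < ε n) fun n => ?_
  have hfreq :=
    hu.frequently_mem Metric.isOpen_ball ((Metric.nonempty_ball (x := z)).2 (hε n))
  rwa [← map_add_atTop_eq_nat 1, frequently_map] at hfreq

theorem not_hasCyclicSubchain_of_injOn {X : Type*} {C : ℕ → X} {m : ℕ}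
    (hC : Set.InjOn C (Set.Iic m)) : ¬ HasCyclicSubchain C m := by
  rintro (⟨i, j, -, him, -, hjm, hij, hCij⟩ | ⟨i, hi, him, hCi | hCi⟩)
  · exact hij (hC (Set.mem_Iic.2 him.le) (Set.mem_Iic.2 hjm.le) hCij)
  · have := hC (Set.mem_Iic.2 him.le) (Set.mem_Iic.2 (Nat.zero_le m)) hCi
    omega
  · have := hC (Set.mem_Iic.2 him.le) (Set.mem_Iic.2 le_rfl) hCi
    omega

theorem Equiv.Perm.zpow_add_one_apply {X : Type*} (F : Equiv.Perm X) (a : ℤ) (z : X) :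
    (F ^ (a + 1)) z = F ((F ^ a) z) := by
  rw [add_comm, zpow_one_add, Equiv.Perm.mul_apply]

section OrbitChain

variable {X : Type*} (F : Equiv.Perm X) (x y : X) (h k : ℕ)

-- `x, F x, …, F^h x, F^(-k) y, …, F^(-1) y, y`, indexed by `0, …, h + 1 + k`.
def orbitChain (i : ℕ) : X :=
  if i ≤ h then (F ^ (i : ℤ)) x else (F ^ ((i : ℤ) - (h + 1 + k : ℕ))) y

variable {F x y h k}

theorem orbitChain_of_le {i : ℕ} (hi : i ≤ h) : orbitChain F x y h k i = (F ^ (i : ℤ)) x :=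
  if_pos hi

theorem orbitChain_of_lt {i : ℕ} (hi : h < i) :
    orbitChain F x y h k i = (F ^ ((i : ℤ) - (h + 1 + k : ℕ))) y :=
  if_neg hi.not_ge

theorem orbitChain_succ {i : ℕ} (hi : i ≠ h) :
    F (orbitChain F x y h k i) = orbitChain F x y h k (i + 1) := by
  rcases lt_or_gt_of_ne hi with hlt | hgt
  · rw [orbitChain_of_le hlt.le, orbitChain_of_le hlt, Nat.cast_succ,
      Equiv.Perm.zpow_add_one_apply]
  · rw [orbitChain_of_lt hgt, orbitChain_of_lt (hgt.trans (Nat.lt_add_one i)),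
      ← Equiv.Perm.zpow_add_one_apply]
    congr 2
    omega

theorem isEpsChain_orbitChain [MetricSpace X] {ε : ℝ} (hε : 0 < ε)
    (hjump : dist ((F ^ ((h + 1 : ℕ) : ℤ)) x) ((F ^ (-(k : ℤ))) y) < ε) :
    IsEpsChain F ε (orbitChain F x y h k) (h + 1 + k) x y := by
  refine ⟨by omega, by simp [orbitChain_of_le (Nat.zero_le h)], ?_, fun i _ => ?_⟩
  · simp [orbitChain_of_lt (by omega : h < h + 1 + k)]
  · by_cases hih : i = h
    · subst hih
      rw [orbitChain_of_le le_rfl, orbitChain_of_lt (Nat.lt_add_one i),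
        ← Equiv.Perm.zpow_add_one_apply,
        show ((i + 1 : ℕ) : ℤ) - ((i + 1 + k : ℕ) : ℤ) = -k by omega]
      exact_mod_cast hjump
    · rw [orbitChain_succ hih, dist_self]
      exact hε

theorem orbitChain_injective (hx : Injective fun i : ℤ => (F ^ i) x)
    (hy : Injective fun i : ℤ => (F ^ i) y) (hxy : ∀ a b : ℤ, (F ^ a) x ≠ (F ^ b) y) :
    Injective (orbitChain F x y h k) := by
  intro i j hij
  unfold orbitChain at hij
  split_ifs at hij
  · exact_mod_cast hx hij
  · exact absurd hij (hxy _ _)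
  · exact absurd hij.symm (hxy _ _)
  · have := hy hij
    omega

theorem mem_chainSupport_orbitChain {p : X} :
    p ∈ chainSupport (orbitChain F x y h k) (h + 1 + k) ↔
      (∃ i ≤ h, (F ^ (i : ℤ)) x = p) ∨ ∃ j ≤ k, (F ^ (-(j : ℤ))) y = p := by
  constructor
  · rintro ⟨i, hi, rfl⟩
    by_cases hih : i ≤ h
    · exact .inl ⟨i, hih, (orbitChain_of_le hih).symm⟩
    · refine .inr ⟨h + 1 + k - i, by omega, ?_⟩
      rw [orbitChain_of_lt (not_le.1 hih)]
      congr 2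
      omega
  · rintro (⟨i, hi, rfl⟩ | ⟨j, hj, rfl⟩)
    · exact ⟨i, by omega, orbitChain_of_le hi⟩
    · refine ⟨h + 1 + k - j, by omega, ?_⟩
      rw [orbitChain_of_lt (by omega)]
      congr 2
      omega

theorem chainSupport_orbitChain_mono {h' : ℕ} (hle : h ≤ h') :
    chainSupport (orbitChain F x y h k) (h + 1 + k) ⊆
      chainSupport (orbitChain F x y h' k) (h' + 1 + k) := fun p hp => by
  rw [mem_chainSupport_orbitChain] at hp ⊢
  exact hp.imp_left fun ⟨i, hi, hip⟩ => ⟨i, hi.trans hle, hip⟩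

theorem iUnion_chainSupport_orbitChain_diff {hs : ℕ → ℕ} (hs_tendsto : Tendsto hs atTop atTop)
    (hx : Injective fun i : ℤ => (F ^ i) x) (hy : Injective fun i : ℤ => (F ^ i) y)
    (hxy : ∀ a b : ℤ, (F ^ a) x ≠ (F ^ b) y) :
    (⋃ n, chainSupport (orbitChain F x y (hs n) k) (hs n + 1 + k)) \ {x, y} =
      {p | ∃ i : ℕ, 1 ≤ i ∧ (F ^ (i : ℤ)) x = p} ∪
        {p | ∃ j : ℕ, 1 ≤ j ∧ j ≤ k ∧ (F ^ (-(j : ℤ))) y = p} := by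
  ext p
  simp only [Set.mem_sdiff, Set.mem_iUnion, mem_chainSupport_orbitChain, Set.mem_insert_iff,
    Set.mem_singleton_iff, Set.mem_union, Set.mem_ofPred_eq, not_or]
  constructor
  · rintro ⟨⟨n, ⟨i, -, rfl⟩ | ⟨j, hj, rfl⟩⟩, hpx, hpy⟩
    · refine .inl ⟨i, Nat.one_le_iff_ne_zero.2 ?_, rfl⟩
      rintro rfl
      simp at hpx
    · refine .inr ⟨j, Nat.one_le_iff_ne_zero.2 ?_, hj, rfl⟩
      rintro rfl
      simp at hpy
  · rintro (⟨i, hi, rfl⟩ | ⟨j, hj, hjk, rfl⟩)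
    · obtain ⟨n, hn⟩ := (hs_tendsto.eventually_ge_atTop i).exists
      refine ⟨⟨n, .inl ⟨i, hn, rfl⟩⟩, fun hpx => ?_, fun hpy => ?_⟩
      · have := @hx i 0 (by simpa using hpx)
        omega
      · exact hxy i 0 (by simpa using hpy)
    · refine ⟨⟨0, .inr ⟨j, hjk, rfl⟩⟩, fun hpx => ?_, fun hpy => ?_⟩
      · exact hxy 0 (-j) (by simpa using hpx.symm)
      · have := @hy (-j) 0 (by simpa using hpy)
        omega

end OrbitChain

theorem stmt11_general {X : Type*} [MetricSpace X]
    (f : X ≃ₜ X)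
    (hno : ∀ p : X, (nhdsWithin p {p}ᶜ).NeBot)
    (x y : X)
    (hxf : Dense {p | ∃ i : ℕ, (f.toEquiv ^ (i : ℤ)) x = p})
    (hyf : Dense {p | ∃ i : ℕ, (f.toEquiv ^ (i : ℤ)) y = p})
    (horb : orbitZ f.toEquiv x ∩ orbitZ f.toEquiv y = ∅)
    (k : ℕ) :
    ∃ (h : ℕ → ℕ) (C : ℕ → ℕ → X) (m : ℕ → ℕ),
      StrictMono h ∧
      (∀ n, m n = h n + 1 + k) ∧
      (∀ n i, C n i =
        if i ≤ h n then (f.toEquiv ^ (i : ℤ)) x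
        else (f.toEquiv ^ ((i : ℤ) - (m n : ℤ))) y) ∧
      (∀ n : ℕ, 1 ≤ n → IsEpsChain (⇑f) (1 / (n : ℝ)) (C n) (m n) x y) ∧
      (∀ n, ¬ HasCyclicSubchain (C n) (m n)) ∧
      (∀ n, chainSupport (C n) (m n) ⊆ chainSupport (C (n + 1)) (m (n + 1))) ∧
      ((⋃ n, chainSupport (C n) (m n)) \ {x, y} =
        {p | ∃ i : ℕ, 1 ≤ i ∧ (f.toEquiv ^ (i : ℤ)) x = p} ∪
        {p | ∃ j : ℕ, 1 ≤ j ∧ j ≤ k ∧ (f.toEquiv ^ (-(j : ℤ))) y = p}) := by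
  have hx := injective_zpow_apply_of_denseRange hxf
  have hy := injective_zpow_apply_of_denseRange hyf
  have hxy : ∀ a b : ℤ, (f.toEquiv ^ a) x ≠ (f.toEquiv ^ b) y := fun a b hab =>
    (Set.eq_empty_iff_forall_notMem.1 horb) _ ⟨⟨a, rfl⟩, b, hab.symm⟩
  obtain ⟨h, hmono, hjump⟩ := DenseRange.exists_strictMono_dist_succ_lt hxf
    ((f.toEquiv ^ (-(k : ℤ))) y) (ε := fun n => 1 / ((n : ℝ) + 1)) fun n => by positivity
  refine ⟨h, fun n => orbitChain f.toEquiv x y (h n) k, fun n => h n + 1 + k, hmono,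
    fun _ => rfl, fun _ _ => rfl, fun n hn => ?_,
    fun _ => not_hasCyclicSubchain_of_injOn (orbitChain_injective hx hy hxy).injOn,
    fun n => chainSupport_orbitChain_mono (hmono.monotone n.le_succ),
    iUnion_chainSupport_orbitChain_diff hmono.tendsto_atTop hx hy hxy⟩
  refine isEpsChain_orbitChain (by positivity) ((hjump n).trans_le ?_)
  gcongr
  linarith

/-- Realization of the order type `ω + k` by nested acyclic `1/n`-chains
`x, f(x), …, f^{h_n}(x), f^{-k}(y), …, f^{-1}(y), y`. -/
theorem stmt11 {X : Type*} [MetricSpace X] [CompactSpace X]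
    (f : X ≃ₜ X)
    (hno : ∀ p : X, (nhdsWithin p {p}ᶜ).NeBot)
    (htrans : ∃ p : X, Dense (orbitZ f.toEquiv p))
    (x y : X)
    (hxf : Dense {p | ∃ i : ℕ, (f.toEquiv ^ (i : ℤ)) x = p})
    (hxb : Dense {p | ∃ i : ℕ, 1 ≤ i ∧ (f.toEquiv ^ (-(i : ℤ))) x = p})
    (hyf : Dense {p | ∃ i : ℕ, (f.toEquiv ^ (i : ℤ)) y = p})
    (hyb : Dense {p | ∃ i : ℕ, 1 ≤ i ∧ (f.toEquiv ^ (-(i : ℤ))) y = p})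
    (horb : orbitZ f.toEquiv x ∩ orbitZ f.toEquiv y = ∅)
    (k : ℕ) :
    ∃ (h : ℕ → ℕ) (C : ℕ → ℕ → X) (m : ℕ → ℕ),
      StrictMono h ∧
      (∀ n, m n = h n + 1 + k) ∧
      (∀ n i, C n i =
        if i ≤ h n then (f.toEquiv ^ (i : ℤ)) x
        else (f.toEquiv ^ ((i : ℤ) - (m n : ℤ))) y) ∧
      (∀ n : ℕ, 1 ≤ n → IsEpsChain (⇑f) (1 / (n : ℝ)) (C n) (m n) x y) ∧
      (∀ n, ¬ HasCyclicSubchain (C n) (m n)) ∧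
      (∀ n, chainSupport (C n) (m n) ⊆ chainSupport (C (n + 1)) (m (n + 1))) ∧
      ((⋃ n, chainSupport (C n) (m n)) \ {x, y} =
        {p | ∃ i : ℕ, 1 ≤ i ∧ (f.toEquiv ^ (i : ℤ)) x = p} ∪
        {p | ∃ j : ℕ, 1 ≤ j ∧ j ≤ k ∧ (f.toEquiv ^ (-(j : ℤ))) y = p}) :=
  stmt11_general f hno x y hxf hyf horb k
end

section
/- Let X be a Polish space without isolated points and f a transitive homeomorphism of X. Then the set M = {(x, y) ∈ X² : both forward and backward orbits of x and of y are dense in X, and O(x) ∩ O(y) = ∅} is comeagre in X². -/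
/-- Forward orbit `{f^k(x) : k ≥ 0}`. -/
def fwdOrbit {X : Type*} (F : Equiv.Perm X) (x : X) : Set X :=
  {y | ∃ k : ℕ, (F ^ (k : ℤ)) x = y}

/-- Backward orbit `{f^{-k}(x) : k ≥ 1}`. -/
def bwdOrbit {X : Type*} (F : Equiv.Perm X) (x : X) : Set X :=
  {y | ∃ k : ℕ, 1 ≤ k ∧ (F ^ (-(k : ℤ))) x = y}

/-!
Separating two points of a nonempty open set `U` and joining the two pieces by the dense orbit
gives a nonzero return time of `U`; iterating on `U ∩ f^{-k} U` makes return times, hence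
transition times between any two nonempty open sets, arbitrarily large. So for each basic open
`o` the points whose forward (backward) orbit meets `o` form a dense open set, and the points
with dense forward and backward orbits form a comeagre set `I`, with `I × I` comeagre in `X²`.
A pair lying off the graphs of all `f^k`, each closed with empty interior as `X` has no isolated
points, has disjoint orbits.
-/

open Set Filter Topology

section Residual

variable {X Y : Type*} [TopologicalSpace X] [TopologicalSpace Y]

theorem TopologicalSpace.IsTopologicalBasis.setOf_dense_mem_residual {B : Set (Set Y)}
    (hB : IsTopologicalBasis B) (hBc : B.Countable) {S : X → Set Y}
    (h : ∀ o ∈ B, o.Nonempty → {x | (o ∩ S x).Nonempty} ∈ residual X) :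
    {x | Dense (S x)} ∈ residual X := by
  have hmem : ∀ o ∈ B, {x | o.Nonempty → (o ∩ S x).Nonempty} ∈ residual X := by
    intro o ho
    rcases o.eq_empty_or_nonempty with rfl | hne
    · simp
    · exact mem_of_superset (h o ho hne) fun x hx _ => hx
  filter_upwards [(countable_bInter_mem hBc).2 hmem] with x hx
  rw [hB.dense_iff]
  exact fun o ho hne => mem_iInter₂.1 hx o ho hne

theorem setOf_apply_ne_mem_residual [T2Space Y] [∀ y : Y, (𝓝[≠] y).NeBot] {g : X → Y}
    (hg : Continuous g) : {q : X × Y | g q.1 ≠ q.2} ∈ residual (X × Y) := by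
  refine residual_of_dense_open (isOpen_ne_fun (hg.comp continuous_fst) continuous_snd) ?_
  exact fun q => map_mem_closure (Continuous.prodMk_right q.1) (dense_compl_singleton (g q.1) q.2)
    fun y hy => Ne.symm hy

end Residual

theorem orbitZ_inter_orbitZ_eq_empty {X : Type*} {F : Equiv.Perm X} {x y : X}
    (h : ∀ k : ℤ, (F ^ k) x ≠ y) : orbitZ F x ∩ orbitZ F y = ∅ := by
  refine eq_empty_iff_forall_notMem.2 ?_
  rintro z ⟨⟨a, rfl⟩, ⟨b, hb⟩⟩
  refine h (-b + a) ?_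
  rw [zpow_add, Equiv.Perm.mul_apply, ← hb, ← Equiv.Perm.mul_apply, ← zpow_add, neg_add_cancel,
    zpow_zero, Equiv.Perm.one_apply]

namespace Homeomorph

variable {X : Type*} [TopologicalSpace X] (f : X ≃ₜ X)

theorem continuous_toEquiv_zpow (k : ℤ) : Continuous ⇑(f.toEquiv ^ k) := by
  let toPerm : (X ≃ₜ X) →* Equiv.Perm X := ⟨⟨Homeomorph.toEquiv, rfl⟩, fun _ _ => rfl⟩
  have hk : f.toEquiv ^ k = toPerm (f ^ k) := (map_zpow toPerm f k).symm
  rw [hk]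
  exact (f ^ k).continuous

theorem toEquiv_zpow_apply_zpow_apply (a b : ℤ) (x : X) :
    (f.toEquiv ^ a) ((f.toEquiv ^ b) x) = (f.toEquiv ^ (a + b)) x := by
  rw [zpow_add, Equiv.Perm.mul_apply]

variable {f} {p : X} (hp : Dense (orbitZ f.toEquiv p))
include hp

theorem exists_zpow_mem_of_dense_orbitZ {U V : Set X} (hU : IsOpen U) (hUne : U.Nonempty)
    (hV : IsOpen V) (hVne : V.Nonempty) : ∃ k : ℤ, ∃ x ∈ U, (f.toEquiv ^ k) x ∈ V := by
  obtain ⟨_, ⟨a, rfl⟩, haU⟩ := hp.exists_mem_open hU hUne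
  obtain ⟨_, ⟨b, rfl⟩, hbV⟩ := hp.exists_mem_open hV hVne
  refine ⟨b - a, _, haU, ?_⟩
  rwa [toEquiv_zpow_apply_zpow_apply, sub_add_cancel]

variable [T2Space X] [∀ x : X, (𝓝[≠] x).NeBot]

theorem exists_pos_zpow_mem_self {U : Set X} (hU : IsOpen U) (hUne : U.Nonempty) :
    ∃ k : ℤ, 1 ≤ k ∧ ∃ x ∈ U, (f.toEquiv ^ k) x ∈ U := by
  obtain ⟨x, hx⟩ := hUne
  obtain ⟨y, hyU, hyx⟩ := (dense_compl_singleton x).inter_open_nonempty U hU ⟨x, hx⟩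
  obtain ⟨u, v, hu, hv, hxu, hyv, huv⟩ := t2_separation (Ne.symm hyx)
  obtain ⟨k, z, ⟨hzu, hzU⟩, hkzv, hkzU⟩ :=
    exists_zpow_mem_of_dense_orbitZ hp (hu.inter hU) ⟨x, hxu, hx⟩ (hv.inter hU) ⟨y, hyv, hyU⟩
  have hk : k ≠ 0 := by
    rintro rfl
    exact disjoint_left.1 huv hzu hkzv
  rcases hk.lt_or_gt with hk | hk
  · refine ⟨-k, by omega, _, hkzU, ?_⟩
    rwa [toEquiv_zpow_apply_zpow_apply, neg_add_cancel, zpow_zero]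
  · exact ⟨k, by omega, z, hzU, hkzU⟩

theorem exists_ge_zpow_mem_self {U : Set X} (hU : IsOpen U) (hUne : U.Nonempty) (N : ℕ) :
    ∃ k : ℤ, N ≤ k ∧ ∃ x ∈ U, (f.toEquiv ^ k) x ∈ U := by
  induction N with
  | zero =>
    obtain ⟨k, hk, hkU⟩ := exists_pos_zpow_mem_self hp hU hUne
    exact ⟨k, by omega, hkU⟩
  | succ N ih =>
    obtain ⟨k, hk, x, hx, hkx⟩ := ih
    obtain ⟨m, hm, w, ⟨hwU, -⟩, -, hkmw⟩ := exists_pos_zpow_mem_self hp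
      (hU.inter (hU.preimage (f.continuous_toEquiv_zpow k))) ⟨x, hx, hkx⟩
    refine ⟨k + m, by omega, w, hwU, ?_⟩
    rwa [mem_preimage, toEquiv_zpow_apply_zpow_apply] at hkmw

theorem exists_ge_zpow_mem {U V : Set X} (hU : IsOpen U) (hUne : U.Nonempty) (hV : IsOpen V)
    (hVne : V.Nonempty) (N : ℤ) : ∃ n : ℤ, N ≤ n ∧ ∃ x ∈ U, (f.toEquiv ^ n) x ∈ V := by
  obtain ⟨k, x, hxU, hkx⟩ := exists_zpow_mem_of_dense_orbitZ hp hU hUne hV hVne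
  obtain ⟨m, hm, w, ⟨hwU, -⟩, -, hmw⟩ := exists_ge_zpow_mem_self hp
    (hU.inter (hV.preimage (f.continuous_toEquiv_zpow k))) ⟨x, hxU, hkx⟩ (N - k).toNat
  refine ⟨k + m, by omega, w, hwU, ?_⟩
  rwa [mem_preimage, toEquiv_zpow_apply_zpow_apply] at hmw

theorem setOf_fwdOrbit_inter_nonempty_mem_residual {o : Set X} (ho : IsOpen o)
    (hne : o.Nonempty) : {x | (o ∩ fwdOrbit f.toEquiv x).Nonempty} ∈ residual X := by
  have hset : {x | (o ∩ fwdOrbit f.toEquiv x).Nonempty} =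
      ⋃ n : ℕ, ⇑(f.toEquiv ^ (n : ℤ)) ⁻¹' o := by
    ext x
    simp [fwdOrbit, Set.Nonempty, and_comm]
  rw [hset]
  refine residual_of_dense_open
    (isOpen_iUnion fun n => ho.preimage (f.continuous_toEquiv_zpow n)) ?_
  refine dense_iff_inter_open.2 fun V hV hVne => ?_
  obtain ⟨n, hn, x, hxV, hnx⟩ := exists_ge_zpow_mem hp hV hVne ho hne 0
  refine ⟨x, hxV, mem_iUnion.2 ⟨n.toNat, ?_⟩⟩
  rwa [mem_preimage, Int.toNat_of_nonneg hn]

theorem setOf_bwdOrbit_inter_nonempty_mem_residual {o : Set X} (ho : IsOpen o)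
    (hne : o.Nonempty) : {x | (o ∩ bwdOrbit f.toEquiv x).Nonempty} ∈ residual X := by
  have hset : {x | (o ∩ bwdOrbit f.toEquiv x).Nonempty} =
      ⋃ n : ℕ, ⋃ _ : 1 ≤ n, ⇑(f.toEquiv ^ (-(n : ℤ))) ⁻¹' o := by
    ext x
    simp [bwdOrbit, Set.Nonempty, and_comm]
  rw [hset]
  refine residual_of_dense_open
    (isOpen_iUnion fun n => isOpen_iUnion fun _ => ho.preimage (f.continuous_toEquiv_zpow _)) ?_
  refine dense_iff_inter_open.2 fun V hV hVne => ?_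
  obtain ⟨n, hn, x, hxo, hnx⟩ := exists_ge_zpow_mem hp ho hne hV hVne 1
  refine ⟨_, hnx, mem_iUnion₂.2 ⟨n.toNat, by omega, ?_⟩⟩
  rwa [mem_preimage, toEquiv_zpow_apply_zpow_apply, Int.toNat_of_nonneg (by omega),
    neg_add_cancel, zpow_zero]

theorem setOf_dense_fwdOrbit_and_dense_bwdOrbit_mem_residual [SecondCountableTopology X] :
    {x | Dense (fwdOrbit f.toEquiv x) ∧ Dense (bwdOrbit f.toEquiv x)} ∈ residual X := by
  obtain ⟨B, hBc, -, hB⟩ := TopologicalSpace.exists_countable_basis X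
  exact inter_mem
    (hB.setOf_dense_mem_residual hBc fun o ho hne =>
      setOf_fwdOrbit_inter_nonempty_mem_residual hp (hB.isOpen ho) hne)
    (hB.setOf_dense_mem_residual hBc fun o ho hne =>
      setOf_bwdOrbit_inter_nonempty_mem_residual hp (hB.isOpen ho) hne)

end Homeomorph

/-- In a Polish space without isolated points with a transitive homeomorphism `f`,
the set of pairs `(x,y)` such that both the forward and backward orbits of `x` and
of `y` are dense and `O(x) ∩ O(y) = ∅` is comeagre in `X²`. -/
theorem stmt13 {X : Type*} [TopologicalSpace X] [PolishSpace X]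
    (f : X ≃ₜ X)
    (hno : ∀ p : X, (nhdsWithin p {p}ᶜ).NeBot)
    (htrans : ∃ p : X, Dense (orbitZ f.toEquiv p)) :
    {q : X × X |
      Dense (fwdOrbit f.toEquiv q.1) ∧ Dense (bwdOrbit f.toEquiv q.1) ∧
      Dense (fwdOrbit f.toEquiv q.2) ∧ Dense (bwdOrbit f.toEquiv q.2) ∧
      orbitZ f.toEquiv q.1 ∩ orbitZ f.toEquiv q.2 = ∅} ∈ residual (X × X) := by
  have : ∀ p : X, (𝓝[≠] p).NeBot := hno
  obtain ⟨p, hp⟩ := htrans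
  have hI := Homeomorph.setOf_dense_fwdOrbit_and_dense_bwdOrbit_mem_residual hp
  have hoff : {q : X × X | ∀ k : ℤ, (f.toEquiv ^ k) q.1 ≠ q.2} ∈ residual (X × X) := by
    rw [ofPred_forall]
    exact countable_iInter_mem.2 fun k => setOf_apply_ne_mem_residual (f.continuous_toEquiv_zpow k)
  filter_upwards [tendsto_residual_of_isOpenMap continuous_fst isOpenMap_fst hI,
    tendsto_residual_of_isOpenMap continuous_snd isOpenMap_snd hI, hoff] with q hx hy hq
  exact ⟨hx.1, hx.2, hy.1, hy.2, orbitZ_inter_orbitZ_eq_empty hq⟩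
end
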